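/- Let $f$ be an entire function of genus zero with zero set $\{1/\lambda_n\}$ (so $f(z) = \prod_{n \geq 0}(1 - z\lambda_n)$ with $\sum_n |\lambda_n| < \infty$), $f(0)=1$, and let $N(r) = \#\{n : |\lambda_n| \geq r\}$. Suppose there is $\tau > 0$ such that $N(r) \leq |\log r|^{\tau}$ for all sufficiently small $r > 0$. Then there is a constant $C > 0$ such that $\log|f(z)| \leq C (\log(1+|z|))^{1+\tau}$ for all $z \in \mathbb{C}$ with $|z|$ sufficiently large. In particular, the order of growth of $z \mapsto f(e^z)$ is at most $\tau + 1$. -/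

import Mathlib

/-!
With `R = ‖z‖` and `aₙ = ‖λₙ‖`, one has `log ‖f z‖ ≤ ∑ log (1 + R aₙ)`. The terms with
`aₙ ≥ R⁻¹` number at most `N(R⁻¹) ≤ (log R) ^ τ`, and each is at most `log (1 + R) + aₙ`.
The remaining ones add up to at most `R ∑_{aₙ < R⁻¹} aₙ`; cutting this tail at the levels
`R⁻¹ ^ 2 ^ j`, where the counting bound grows only by the factor `2 ^ τ` per level, shows that it is
`O((log R) ^ τ)`. So `log ‖f z‖ = O((log ‖z‖) ^ (1 + τ))`, and `‖exp w‖ ≤ exp ‖w‖` turns this into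
`log ‖f (exp w)‖ = O(‖w‖ ^ (1 + τ))`.
-/

open Filter Topology

section SumBelow

variable {ι : Type*} {a : ι → ℝ}

theorem Summable.finite_setOf_le (hs : Summable a) {r : ℝ} (hr : 0 < r) :
    {i | r ≤ a i}.Finite := by
  simpa only [not_lt] using eventually_cofinite.1 (hs.tendsto_cofinite_zero.eventually_lt_const hr)

theorem tsum_indicator_const (s : Set ι) (x : ℝ) :
    ∑' i, s.indicator (fun _ => x) i = s.ncard * x := by
  rw [← tsum_subtype, tsum_const, Nat.card_coe_set_eq, nsmul_eq_mul]

noncomputable def sumBelow (a : ι → ℝ) (x : ℝ) : ℝ :=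
  ∑' i, {j | a j < x}.indicator a i

theorem sumBelow_le_ncard_mul_add (hs : Summable a) {x y : ℝ} (hx : 0 ≤ x)
    (hy : 0 < y) : sumBelow a x ≤ {i | y ≤ a i}.ncard * x + sumBelow a y := by
  have hpoint : ∀ i, {j | a j < x}.indicator a i ≤
      {j | y ≤ a j}.indicator (fun _ => x) i + {j | a j < y}.indicator a i := by
    intro i
    simp only [Set.indicator_apply, Set.mem_ofPred_eq]
    split_ifs <;> linarith
  have hfin : Summable ({j | y ≤ a j}.indicator fun _ => x) :=
    summable_of_hasFiniteSupport <| (hs.finite_setOf_le hy).subset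
      Set.support_indicator_subset
  calc sumBelow a x
      ≤ ∑' i, ({j | y ≤ a j}.indicator (fun _ => x) i + {j | a j < y}.indicator a i) :=
        (hs.indicator _).tsum_le_tsum hpoint (hfin.add (hs.indicator _))
    _ = {i | y ≤ a i}.ncard * x + sumBelow a y := by
        rw [hfin.tsum_add (hs.indicator _), tsum_indicator_const, sumBelow]

theorem tendsto_sumBelow_nhdsGT_zero (ha : ∀ i, 0 ≤ a i) (hs : Summable a) :
    Tendsto (sumBelow a) (𝓝[>] 0) (𝓝 0) := by
  have hterm : ∀ i, Tendsto (fun x => {j | a j < x}.indicator a i) (𝓝[>] 0) (𝓝 0) := by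
    intro i
    refine tendsto_const_nhds.congr' ?_
    rcases (ha i).eq_or_lt with hai | hai
    · exact Eventually.of_forall fun x => by simp [Set.indicator_apply, ← hai]
    · filter_upwards [Ioo_mem_nhdsGT hai] with x hx
      exact (Set.indicator_of_notMem (s := {j | a j < x}) (not_lt.2 hx.2.le) a).symm
  have hbound : ∀ x i, ‖{j | a j < x}.indicator a i‖ ≤ a i := fun x i => by
    rw [Real.norm_of_nonneg (Set.indicator_nonneg (fun j _ => ha j) i)]
    exact Set.indicator_le_self' (fun j _ => ha j) i
  have h := tendsto_tsum_of_dominated_convergence hs hterm (Eventually.of_forall hbound)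
  rw [tsum_zero] at h
  exact h

theorem sumBelow_le_sum_range_add (hs : Summable a) {δ : ℝ} (hδ : 0 < δ) (J : ℕ) :
    sumBelow a δ ≤ ∑ j ∈ Finset.range J, {i | δ ^ 2 ^ (j + 1) ≤ a i}.ncard * δ ^ 2 ^ j
      + sumBelow a (δ ^ 2 ^ J) := by
  induction J with
  | zero => simp
  | succ J ih =>
    have hstep := sumBelow_le_ncard_mul_add hs (pow_pos hδ (2 ^ J)).le (pow_pos hδ (2 ^ (J + 1)))
    rw [Finset.sum_range_succ]
    linarith

theorem sumBelow_le_of_forall_sum_range_le (ha : ∀ i, 0 ≤ a i) (hs : Summable a) {δ B : ℝ}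
    (hδ0 : 0 < δ) (hδ1 : δ < 1)
    (hB : ∀ J, ∑ j ∈ Finset.range J, {i | δ ^ 2 ^ (j + 1) ≤ a i}.ncard * δ ^ 2 ^ j ≤ B) :
    sumBelow a δ ≤ B := by
  have hlevels : Tendsto (fun J : ℕ => δ ^ 2 ^ J) atTop (𝓝[>] 0) :=
    tendsto_nhdsWithin_iff.2 ⟨(tendsto_pow_atTop_nhds_zero_of_lt_one hδ0.le hδ1).comp
      (tendsto_atTop_mono (fun J => Nat.lt_two_pow_self.le) tendsto_id),
      Eventually.of_forall fun J => pow_pos hδ0 _⟩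
  have hlim := (tendsto_sumBelow_nhdsGT_zero ha hs).comp hlevels
  refine ge_of_tendsto (by simpa using hlim.const_add B) (Eventually.of_forall fun J => ?_)
  linarith [sumBelow_le_sum_range_add hs hδ0 J, hB J]

theorem rpow_abs_log_pow_two_pow_mul_le {δ : ℝ} (hδ0 : 0 < δ) (hδ1 : δ ≤ 1) (τ : ℝ) (j : ℕ) :
    |Real.log (δ ^ 2 ^ (j + 1))| ^ τ * δ ^ 2 ^ j
      ≤ (2 * |Real.log δ|) ^ τ * δ * (2 ^ τ * δ) ^ j := by
  have hlog : |Real.log (δ ^ 2 ^ (j + 1))| = (2 : ℝ) ^ j * (2 * |Real.log δ|) := by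
    rw [Real.log_pow, abs_mul, Nat.abs_cast]
    push_cast
    ring
  have hpow : δ ^ 2 ^ j ≤ δ * δ ^ j := by
    rw [← pow_succ']
    exact pow_le_pow_of_le_one hδ0.le hδ1 Nat.lt_two_pow_self
  calc |Real.log (δ ^ 2 ^ (j + 1))| ^ τ * δ ^ 2 ^ j
      = (2 ^ τ) ^ j * (2 * |Real.log δ|) ^ τ * δ ^ 2 ^ j := by
        rw [hlog, Real.mul_rpow (by positivity) (by positivity), ← Real.rpow_natCast,
          ← Real.rpow_mul zero_le_two, mul_comm (j : ℝ), Real.rpow_mul zero_le_two,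
          Real.rpow_natCast]
    _ ≤ (2 ^ τ) ^ j * (2 * |Real.log δ|) ^ τ * (δ * δ ^ j) := by gcongr
    _ = (2 * |Real.log δ|) ^ τ * δ * (2 ^ τ * δ) ^ j := by ring

theorem eventually_sumBelow_le {τ r0 : ℝ} (hr0 : 0 < r0) (ha : ∀ i, 0 ≤ a i) (hs : Summable a)
    (hN : ∀ r : ℝ, 0 < r → r < r0 → ({i | r ≤ a i}.ncard : ℝ) ≤ |Real.log r| ^ τ) :
    ∀ᶠ δ in 𝓝[>] 0, sumBelow a δ ≤ 2 * δ * (2 * |Real.log δ|) ^ τ := by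
  have hsmall : ∀ᶠ δ in 𝓝 (0 : ℝ), δ < r0 ∧ δ < 1 ∧ 2 ^ τ * δ ≤ 1 / 2 :=
    (eventually_lt_nhds hr0).and <| (eventually_lt_nhds one_pos).and <|
      ((continuous_const_mul _).tendsto' 0 0 (mul_zero _)).eventually
        (eventually_le_nhds (by norm_num))
  filter_upwards [self_mem_nhdsWithin, nhdsWithin_le_nhds hsmall]
    with δ (hδ0 : 0 < δ) ⟨hδr, hδ1, hδτ⟩
  refine sumBelow_le_of_forall_sum_range_le ha hs hδ0 hδ1 fun J => ?_
  have hterm : ∀ j, ({i | δ ^ 2 ^ (j + 1) ≤ a i}.ncard : ℝ) * δ ^ 2 ^ j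
      ≤ (2 * |Real.log δ|) ^ τ * δ * (1 / 2) ^ j := by
    intro j
    have hlevel : δ ^ 2 ^ (j + 1) < r0 :=
      (pow_le_of_le_one hδ0.le hδ1.le (by positivity)).trans_lt hδr
    calc ({i | δ ^ 2 ^ (j + 1) ≤ a i}.ncard : ℝ) * δ ^ 2 ^ j
        ≤ |Real.log (δ ^ 2 ^ (j + 1))| ^ τ * δ ^ 2 ^ j := by
          gcongr
          exact hN _ (by positivity) hlevel
      _ ≤ (2 * |Real.log δ|) ^ τ * δ * (2 ^ τ * δ) ^ j :=
          rpow_abs_log_pow_two_pow_mul_le hδ0 hδ1.le τ j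
      _ ≤ (2 * |Real.log δ|) ^ τ * δ * (1 / 2) ^ j := by gcongr
  calc ∑ j ∈ Finset.range J, ({i | δ ^ 2 ^ (j + 1) ≤ a i}.ncard : ℝ) * δ ^ 2 ^ j
      ≤ ∑ j ∈ Finset.range J, (2 * |Real.log δ|) ^ τ * δ * (1 / 2) ^ j :=
        Finset.sum_le_sum fun j _ => hterm j
    _ = (2 * |Real.log δ|) ^ τ * δ * ∑ j ∈ Finset.range J, (1 / 2 : ℝ) ^ j := by
        rw [Finset.mul_sum]
    _ ≤ (2 * |Real.log δ|) ^ τ * δ * 2 := by gcongr; exact sum_geometric_two_le J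
    _ = 2 * δ * (2 * |Real.log δ|) ^ τ := by ring

end SumBelow

section LogSum

variable {ι : Type*} {a : ι → ℝ}

theorem summable_log_one_add_mul (ha : ∀ i, 0 ≤ a i) (hs : Summable a) {R : ℝ} (hR : 0 ≤ R) :
    Summable fun i => Real.log (1 + R * a i) :=
  (hs.mul_left R).of_nonneg_of_le (fun i => Real.log_nonneg (by nlinarith [ha i]))
    fun i => (Real.log_le_sub_one_of_pos (by nlinarith [ha i])).trans (by linarith)

theorem tsum_log_one_add_mul_le_mul_tsum (ha : ∀ i, 0 ≤ a i) (hs : Summable a) {R : ℝ}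
    (hR : 0 ≤ R) :
    ∑' i, Real.log (1 + R * a i) ≤ R * ∑' i, a i := by
  rw [← tsum_mul_left]
  exact (summable_log_one_add_mul ha hs hR).tsum_le_tsum
    (fun i => (Real.log_le_sub_one_of_pos (by nlinarith [ha i])).trans (by linarith))
    (hs.mul_left R)

theorem tsum_log_one_add_mul_le (ha : ∀ i, 0 ≤ a i) (hs : Summable a) {R : ℝ} (hR : 0 < R) :
    ∑' i, Real.log (1 + R * a i) ≤
      {i | R⁻¹ ≤ a i}.ncard * Real.log (1 + R) + ∑' i, a i + R * sumBelow a R⁻¹ := by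
  have hpoint : ∀ i, Real.log (1 + R * a i) ≤ {j | R⁻¹ ≤ a j}.indicator
      (fun _ => Real.log (1 + R)) i + a i + R * {j | a j < R⁻¹}.indicator a i := by
    intro i
    have hai := ha i
    by_cases hbig : R⁻¹ ≤ a i
    · have hlog1 := Real.log_le_sub_one_of_pos (show 0 < 1 + a i by linarith)
      have hmul : 1 + R * a i ≤ (1 + R) * (1 + a i) := by nlinarith
      have := Real.log_le_log (by positivity) hmul
      rw [Real.log_mul (by positivity) (by positivity)] at this
      rw [Set.indicator_of_mem (show i ∈ {j | R⁻¹ ≤ a j} from hbig),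
        Set.indicator_of_notMem (show i ∉ {j | a j < R⁻¹} from not_lt.2 hbig), mul_zero, add_zero]
      linarith
    · have := Real.log_le_sub_one_of_pos (show 0 < 1 + R * a i by positivity)
      rw [Set.indicator_of_notMem (show i ∉ {j | R⁻¹ ≤ a j} from hbig),
        Set.indicator_of_mem (show i ∈ {j | a j < R⁻¹} from not_le.1 hbig), zero_add]
      linarith
  have hfin : Summable ({j | R⁻¹ ≤ a j}.indicator fun _ => Real.log (1 + R)) :=
    summable_of_hasFiniteSupport <| (hs.finite_setOf_le (inv_pos.2 hR)).subset
      Set.support_indicator_subset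
  have hsmall : Summable fun i => R * {j | a j < R⁻¹}.indicator a i := (hs.indicator _).mul_left R
  calc ∑' i, Real.log (1 + R * a i)
      ≤ ∑' i, ({j | R⁻¹ ≤ a j}.indicator (fun _ => Real.log (1 + R)) i + a i
          + R * {j | a j < R⁻¹}.indicator a i) :=
        (summable_log_one_add_mul ha hs hR.le).tsum_le_tsum hpoint ((hfin.add hs).add hsmall)
    _ = _ := by
        rw [(hfin.add hs).tsum_add hsmall, hfin.tsum_add hs, tsum_indicator_const, tsum_mul_left,
          sumBelow]

theorem exists_pos_eventually_tsum_log_one_add_mul_le {τ r0 : ℝ}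
    (hτ : 0 ≤ τ) (hr0 : 0 < r0) (ha : ∀ i, 0 ≤ a i) (hs : Summable a)
    (hN : ∀ r : ℝ, 0 < r → r < r0 → ({i | r ≤ a i}.ncard : ℝ) ≤ |Real.log r| ^ τ) :
    ∃ C, 0 < C ∧ ∀ᶠ R in atTop,
      ∑' i, Real.log (1 + R * a i) ≤ C * Real.log (1 + R) ^ (1 + τ) := by
  set A := ∑' i, a i
  have hA : 0 ≤ A := tsum_nonneg ha
  refine ⟨1 + A + 2 * 2 ^ τ, by positivity, ?_⟩
  filter_upwards [eventually_ge_atTop (Real.exp 1),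
    tendsto_inv_atTop_zero.eventually_lt_const hr0,
    tendsto_inv_atTop_nhdsGT_zero.eventually (eventually_sumBelow_le hr0 ha hs hN)]
    with R hRe hRr0 hsum
  have hR1 : 1 ≤ R := (Real.one_le_exp zero_le_one).trans hRe
  have hR : 0 < R := by linarith
  set x := Real.log (1 + R)
  have hlogR : |Real.log R⁻¹| = Real.log R := by
    rw [Real.log_inv, abs_neg, abs_of_nonneg (Real.log_nonneg hR1)]
  have hlogRx : Real.log R ≤ x := Real.log_le_log hR (by linarith)
  have hx1 : 1 ≤ x := by
    rw [Real.le_log_iff_exp_le (by linarith)]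
    linarith
  have hxτ : x ^ τ ≤ x ^ (1 + τ) := Real.rpow_le_rpow_of_exponent_le hx1 (by linarith)
  have hcount : ({i | R⁻¹ ≤ a i}.ncard : ℝ) ≤ x ^ τ :=
    (hlogR ▸ hN _ (inv_pos.2 hR) hRr0).trans
      (Real.rpow_le_rpow (Real.log_nonneg hR1) hlogRx hτ)
  have htail : R * sumBelow a R⁻¹ ≤ 2 * 2 ^ τ * x ^ τ := by
    calc R * sumBelow a R⁻¹ ≤ R * (2 * R⁻¹ * (2 * Real.log R) ^ τ) := by
          rw [← hlogR]; gcongr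
      _ = 2 * 2 ^ τ * Real.log R ^ τ := by
          rw [Real.mul_rpow zero_le_two (Real.log_nonneg hR1)]
          field_simp
      _ ≤ 2 * 2 ^ τ * x ^ τ := by gcongr; exact Real.log_nonneg hR1
  calc ∑' i, Real.log (1 + R * a i)
      ≤ {i | R⁻¹ ≤ a i}.ncard * x + A + R * sumBelow a R⁻¹ := tsum_log_one_add_mul_le ha hs hR
    _ ≤ x ^ τ * x + A * x ^ (1 + τ) + 2 * 2 ^ τ * x ^ (1 + τ) := by
        have hcount_mul : {i | R⁻¹ ≤ a i}.ncard * x ≤ x ^ τ * x := by gcongr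
        have hA_le : A ≤ A * x ^ (1 + τ) :=
          le_mul_of_one_le_right hA (Real.one_le_rpow hx1 (by linarith))
        have htail_le : 2 * 2 ^ τ * x ^ τ ≤ 2 * 2 ^ τ * x ^ (1 + τ) := by gcongr
        linarith
    _ = (1 + A + 2 * 2 ^ τ) * x ^ (1 + τ) := by
        rw [Real.rpow_add (by linarith), Real.rpow_one]
        ring

end LogSum

theorem log_norm_tprod_one_sub_le {ι R : Type*} [NormedCommRing R] [NormOneClass R]
    (u : ι → R) (hu : Summable fun i => ‖u i‖) :
    Real.log ‖∏' i, (1 - u i)‖ ≤ ∑' i, Real.log (1 + ‖u i‖) := by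
  have hsum : Summable fun i => Real.log (1 + ‖u i‖) := by
    simpa using summable_log_one_add_mul (fun i => norm_nonneg (u i)) hu zero_le_one
  have hS : 0 ≤ ∑' i, Real.log (1 + ‖u i‖) := tsum_nonneg fun i => Real.log_nonneg (by simp)
  have hfinite : ∀ s : Finset ι, ‖∏ i ∈ s, (1 - u i)‖ ≤ Real.exp (∑' i, Real.log (1 + ‖u i‖)) := by
    intro s
    calc ‖∏ i ∈ s, (1 - u i)‖ ≤ ∏ i ∈ s, ‖1 - u i‖ := Finset.norm_prod_le s _
      _ ≤ ∏ i ∈ s, Real.exp (Real.log (1 + ‖u i‖)) := by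
          refine Finset.prod_le_prod (fun i _ => norm_nonneg _) fun i _ => ?_
          rw [Real.exp_log (by positivity)]
          exact (norm_sub_le _ _).trans_eq (by rw [norm_one])
      _ = Real.exp (∑ i ∈ s, Real.log (1 + ‖u i‖)) := (Real.exp_sum _ _).symm
      _ ≤ Real.exp (∑' i, Real.log (1 + ‖u i‖)) :=
          Real.exp_le_exp.2 (hsum.sum_le_tsum s fun i _ => Real.log_nonneg (by simp))
  have hnorm : ‖∏' i, (1 - u i)‖ ≤ Real.exp (∑' i, Real.log (1 + ‖u i‖)) := by
    by_cases hm : Multipliable fun i => 1 - u i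
    · exact le_of_tendsto' (Tendsto.norm hm.hasProd) hfinite
    · rw [tprod_eq_one_of_not_multipliable hm, norm_one]
      exact Real.one_le_exp hS
  rcases (norm_nonneg (∏' i, (1 - u i))).eq_or_lt with h0 | h0
  · rw [← h0, Real.log_zero]
    exact hS
  · exact (Real.log_le_iff_le_exp h0).2 hnorm

theorem Complex.log_one_add_norm_exp_le (w : ℂ) : Real.log (1 + ‖exp w‖) ≤ ‖w‖ + 1 := by
  rw [Real.log_le_iff_le_exp (by positivity), Real.exp_add]
  have hexp : ‖exp w‖ ≤ Real.exp ‖w‖ := by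
    rw [norm_exp]
    exact Real.exp_le_exp.2 (re_le_norm w)
  have h1 : 1 ≤ Real.exp ‖w‖ := Real.one_le_exp (norm_nonneg w)
  have h2 : 2 ≤ Real.exp 1 := by linarith [Real.add_one_le_exp 1]
  nlinarith

theorem eventually_log_mul_add_one_rpow_le {K p ε : ℝ} (hK : 0 < K) (hp : 0 ≤ p) (hε : 0 < ε) :
    ∀ᶠ t in atTop, Real.log (K * (t + 1) ^ p) ≤ (p + ε) * Real.log t := by
  filter_upwards [eventually_ge_atTop 1,
    (Real.tendsto_log_atTop.const_mul_atTop hε).eventually_ge_atTop (Real.log K + p * Real.log 2)]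
    with t ht1 ht
  have hlog : Real.log (t + 1) ≤ Real.log 2 + Real.log t := by
    rw [← Real.log_mul two_ne_zero (by positivity)]
    exact Real.log_le_log (by positivity) (by linarith)
  rw [Real.log_mul hK.ne' (Real.rpow_pos_of_pos (by positivity) p).ne',
    Real.log_rpow (by positivity)]
  nlinarith

theorem exists_log_max_one_comp_exp_le {g : ℂ → ℝ} {p C M R0 : ℝ} (hp : 0 ≤ p) (hC : 0 ≤ C)
    (hsmall : ∀ z, ‖z‖ < R0 → g z ≤ M)
    (hlarge : ∀ z, R0 ≤ ‖z‖ → g z ≤ C * Real.log (1 + ‖z‖) ^ p) {ε : ℝ} (hε : 0 < ε) :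
    ∃ R1, ∀ w : ℂ, R1 ≤ ‖w‖ → Real.log (max 1 (g (Complex.exp w))) ≤ (p + ε) * Real.log ‖w‖ := by
  set K := 1 + |M| + C
  have hK1 : 1 ≤ K := by linarith [abs_nonneg M]
  have hbound : ∀ w : ℂ, max 1 (g (Complex.exp w)) ≤ K * (‖w‖ + 1) ^ p := by
    intro w
    have hone : 1 ≤ (‖w‖ + 1) ^ p := Real.one_le_rpow (by linarith [norm_nonneg w]) hp
    have hK_le : K ≤ K * (‖w‖ + 1) ^ p := le_mul_of_one_le_right (by linarith) hone
    refine max_le (hK1.trans hK_le) ?_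
    by_cases hw : R0 ≤ ‖Complex.exp w‖
    · calc g (Complex.exp w) ≤ C * Real.log (1 + ‖Complex.exp w‖) ^ p := hlarge _ hw
        _ ≤ C * (‖w‖ + 1) ^ p := by
            gcongr
            · exact Real.log_nonneg (by simp)
            · exact Complex.log_one_add_norm_exp_le w
        _ ≤ K * (‖w‖ + 1) ^ p := by gcongr; linarith [abs_nonneg M]
    · calc g (Complex.exp w) ≤ M := hsmall _ (not_le.1 hw)
        _ ≤ K := by linarith [le_abs_self M]
        _ ≤ K * (‖w‖ + 1) ^ p := hK_le
  obtain ⟨R1, hR1⟩ := eventually_atTop.1 (eventually_log_mul_add_one_rpow_le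
    (by positivity : 0 < K) hp hε)
  exact ⟨R1, fun w hw => (Real.log_le_log (by positivity) (hbound w)).trans (hR1 _ hw)⟩

/-- let `f(z) = ∏ (1 - z λ_n)` be a genus-zero canonical product with
`∑ |λ_n| < ∞`, and `N(r) = #{n : |λ_n| ≥ r}`. If `N(r) ≤ |log r|^τ` for small `r`, then
`log |f(z)| ≤ C (log (1+|z|))^{1+τ}` for large `|z|`; in particular the order of growth of
`z ↦ f(e^z)` is at most `τ + 1`. -/
theorem statement6 (lam : ℕ → ℂ) (hsum : Summable fun n => ‖lam n‖)
    (τ : ℝ) (hτ : 0 < τ)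
    (hN : ∃ r0 : ℝ, 0 < r0 ∧ ∀ r : ℝ, 0 < r → r < r0 →
      (({n : ℕ | r ≤ ‖lam n‖}).ncard : ℝ) ≤ |Real.log r| ^ τ) :
    (∃ C : ℝ, 0 < C ∧ ∃ R0 : ℝ, ∀ z : ℂ, R0 ≤ ‖z‖ →
        Real.log ‖∏' n : ℕ, (1 - z * lam n)‖ ≤ C * (Real.log (1 + ‖z‖)) ^ (1 + τ)) ∧
      ∀ ε : ℝ, 0 < ε → ∃ R1 : ℝ, ∀ w : ℂ, R1 ≤ ‖w‖ →
        Real.log (max 1 (Real.log ‖∏' n : ℕ, (1 - Complex.exp w * lam n)‖)) ≤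
          (τ + 1 + ε) * Real.log ‖w‖ := by
  obtain ⟨r0, hr0, hN⟩ := hN
  have hnorm : ∀ n, 0 ≤ ‖lam n‖ := fun n => norm_nonneg _
  have hlog : ∀ z : ℂ, Real.log ‖∏' n, (1 - z * lam n)‖ ≤ ∑' n, Real.log (1 + ‖z‖ * ‖lam n‖) :=
    fun z => by
      simpa only [norm_mul] using log_norm_tprod_one_sub_le (fun n => z * lam n)
        (by simpa only [norm_mul] using hsum.mul_left ‖z‖)
  obtain ⟨C, hC, hbound⟩ :=
    exists_pos_eventually_tsum_log_one_add_mul_le hτ.le hr0 hnorm hsum hN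
  obtain ⟨R0, hR0⟩ := eventually_atTop.1 hbound
  have hlarge : ∀ z : ℂ, R0 ≤ ‖z‖ →
      Real.log ‖∏' n, (1 - z * lam n)‖ ≤ C * Real.log (1 + ‖z‖) ^ (1 + τ) :=
    fun z hz => (hlog z).trans (hR0 _ hz)
  have hsmall : ∀ z : ℂ, ‖z‖ < R0 → Real.log ‖∏' n, (1 - z * lam n)‖ ≤ R0 * ∑' n, ‖lam n‖ :=
    fun z hz => (hlog z).trans <|
      (tsum_log_one_add_mul_le_mul_tsum hnorm hsum (norm_nonneg z)).trans (by gcongr)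
  refine ⟨⟨C, hC, R0, hlarge⟩, fun ε hε => ?_⟩
  rw [add_comm τ 1]
  exact exists_log_max_one_comp_exp_le (by linarith) hC.le hsmall hlarge hε
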